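/- Let P(n,2) = Σ_{t≥1} c_t(n) and γ = Σ_{t≥1} q_t where q_1 = 1/2 and q_t = ((t-1)/(2^t-t-1))·q_{t-1}. Then for every ε > 0 there exists N such that for all n ≥ N, P(n,2) > (γ − ε)·2^n. Combined with the upper bound P(n,2) ≤ γ·2^n, this gives P(n,2)/2^n → γ as n → ∞. -/

import Mathlib

/-!
Through its gaps `d j = p j - p (j + 1)` (with `p t = 0`), a partition `p 0 > ⋯ > p (t-1) ≥ 1`
of `n` becomes a vector `d ≥ 1` with `∑ (j + 1) d j = n`, and its weight becomes
`∏ (j + 2) ^ d j`. Dividing by `2 ^ n = ∏ 2 ^ ((j + 1) d j)` leaves `∏ x j ^ d j` with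
`x j = (j + 2) / 2 ^ (j + 1)`. As `x 0 = 1`, the first gap only has to be positive, so
`c_t(n) / 2^n` is `1 / (t (t + 1))` times the sum of `∏_{j ≥ 1} x j ^ d j` over positive
`(d 1, …, d (t-1))` with `∑ (j + 2) d j < n`. These sums are bounded by, and converge to,
`∏_{j ≥ 1} x j / (1 - x j)`, and `1 / (t (t + 1))` times this product is `q_t`. Since `∑ q_t`
converges, Tannery's theorem gives `P(n,2) / 2^n → γ`, which contains the lower bound.
-/

open scoped Classical

/-- `primeWeight t n` : sum over partitions of `n` into `t` distinct positive parts
`p 0 > p 1 > ⋯ > p (t-1) ≥ 1` of `(1/(t(t+1))) ∏_{i=1}^{t} ((i+1)/i)^{p_i}`. -/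
noncomputable def primeWeight (t n : ℕ) : ℝ :=
  ∑ p ∈ (Fintype.piFinset (fun _ : Fin t => Finset.range (n + 1))).filter
      (fun p => (∀ i j : Fin t, i < j → p j < p i) ∧ (∀ i, 1 ≤ p i) ∧
        ∑ i, p i = n),
    (1 / ((t : ℝ) * ((t : ℝ) + 1))) *
      ∏ i : Fin t, ((((i : ℕ) : ℝ) + 2) / (((i : ℕ) : ℝ) + 1)) ^ p i

/-- `qseq 1 = 1/2` and `qseq t = ((t-1)/(2^t - t - 1)) * qseq (t-1)` for `t ≥ 2`. -/
noncomputable def qseq : ℕ → ℝ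
  | 0 => 0
  | 1 => 1 / 2
  | t + 2 => (((t : ℝ) + 1) / (2 ^ (t + 2) - ((t : ℝ) + 2) - 1)) * qseq (t + 1)

open Finset Filter Topology

section TailSums

variable {t : ℕ}

def tailSums (d : Fin t → ℕ) (i : Fin t) : ℕ := ∑ j ∈ Ici i, d j

lemma sum_tailSums (d : Fin t → ℕ) :
    ∑ i, tailSums d i = ∑ j : Fin t, ((j : ℕ) + 1) * d j := by
  simp only [tailSums]
  rw [sum_comm' (t' := univ) (s' := Iic) (by simp)]
  simp [Fin.card_Iic]

lemma prod_pow_tailSums {M : Type*} [CommMonoid M] (a : Fin t → M) (d : Fin t → ℕ) :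
    ∏ i, a i ^ tailSums d i = ∏ j, (∏ i ∈ Iic j, a i) ^ d j := by
  simp only [tailSums, ← prod_pow_eq_pow_sum, ← prod_pow]
  exact prod_comm' (by simp)

end TailSums

section Gaps

variable {m : ℕ}

lemma tailSums_last (d : Fin (m + 1) → ℕ) : tailSums d (Fin.last m) = d (Fin.last m) := by
  simp [tailSums, ← Fin.top_eq_last, Ici_top]

lemma tailSums_castSucc (d : Fin (m + 1) → ℕ) (i : Fin m) :
    tailSums d i.castSucc = d i.castSucc + tailSums d i.succ := by
  rw [tailSums, ← Ioi_insert, sum_insert notMem_Ioi_self, tailSums]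
  congr 2
  ext k
  simp [Fin.castSucc_lt_iff_succ_le]

lemma strictAnti_tailSums {d : Fin (m + 1) → ℕ} (hd : ∀ j, 1 ≤ d j) :
    StrictAnti (tailSums d) :=
  Fin.strictAnti_iff_succ_lt.2 fun i => by have := hd i.castSucc; rw [tailSums_castSucc]; omega

def gaps (p : Fin (m + 1) → ℕ) : Fin (m + 1) → ℕ :=
  Fin.lastCases (p (Fin.last m)) fun i => p i.castSucc - p i.succ

lemma tailSums_gaps {p : Fin (m + 1) → ℕ} (hp : Antitone p) : tailSums (gaps p) = p := by
  funext i
  induction i using Fin.reverseInduction with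
  | last => simp [tailSums_last, gaps]
  | cast i ih =>
    rw [tailSums_castSucc, ih, gaps, Fin.lastCases_castSucc,
      Nat.sub_add_cancel (hp (Fin.castSucc_lt_succ (i := i)).le)]

lemma gaps_tailSums (d : Fin (m + 1) → ℕ) : gaps (tailSums d) = d := by
  funext j
  induction j using Fin.lastCases with
  | last => simp [gaps, tailSums_last]
  | cast j => simp [gaps, tailSums_castSucc]

lemma one_le_gaps {p : Fin (m + 1) → ℕ} (hp : StrictAnti p) (hlast : 1 ≤ p (Fin.last m))
    (j : Fin (m + 1)) : 1 ≤ gaps p j := by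
  induction j using Fin.lastCases with
  | last => simpa [gaps]
  | cast j =>
    have := hp (Fin.castSucc_lt_succ (i := j))
    simp only [gaps, Fin.lastCases_castSucc]
    omega

lemma sum_tailSums_eq_head_add (d : Fin (m + 1) → ℕ) :
    ∑ i, tailSums d i = d 0 + ∑ j : Fin m, ((j : ℕ) + 2) * Fin.tail d j := by
  rw [sum_tailSums, Fin.sum_univ_succ]
  simp [Fin.tail, add_assoc, one_add_one_eq_two]

end Gaps

def positiveVectorsBelow {ι : Type*} [Fintype ι] [DecidableEq ι] (w : ι → ℕ) (n : ℕ) :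
    Finset (ι → ℕ) :=
  (Fintype.piFinset fun _ => Icc 1 n).filter fun e => ∑ i, w i * e i < n

def distinctParts (t n : ℕ) : Finset (Fin t → ℕ) :=
  (Fintype.piFinset fun _ : Fin t => range (n + 1)).filter
    (fun p => (∀ i j : Fin t, i < j → p j < p i) ∧ (∀ i, 1 ≤ p i) ∧ ∑ i, p i = n)

section Bijection

variable {m : ℕ}

lemma tailSums_mem_distinctParts {d : Fin (m + 1) → ℕ} (hd : ∀ j, 1 ≤ d j) {n : ℕ}
    (hn : ∑ i, tailSums d i = n) : tailSums d ∈ distinctParts (m + 1) n := by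
  have hanti := strictAnti_tailSums hd
  refine mem_filter.2 ⟨Fintype.mem_piFinset.2 fun i => mem_range.2 ?_, fun i j hij => hanti hij,
    fun i => ?_, hn⟩
  · exact Nat.lt_succ_of_le (hn ▸ single_le_sum (fun _ _ => Nat.zero_le _) (mem_univ i))
  · calc 1 ≤ d (Fin.last m) := hd _
      _ = tailSums d (Fin.last m) := (tailSums_last d).symm
      _ ≤ tailSums d i := hanti.antitone (Fin.le_last i)

lemma tail_mem_positiveVectorsBelow {d : Fin (m + 1) → ℕ} (hd : ∀ j, 1 ≤ d j) {n : ℕ}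
    (hn : ∑ i, tailSums d i = n) :
    Fin.tail d ∈ positiveVectorsBelow (fun j : Fin m => (j : ℕ) + 2) n := by
  rw [sum_tailSums_eq_head_add] at hn
  have hlt : ∑ j : Fin m, ((j : ℕ) + 2) * Fin.tail d j < n := by have := hd 0; omega
  refine mem_filter.2 ⟨Fintype.mem_piFinset.2 fun j => mem_Icc.2 ⟨hd _, ?_⟩, hlt⟩
  calc Fin.tail d j ≤ ((j : ℕ) + 2) * Fin.tail d j := Nat.le_mul_of_pos_left _ (by omega)
    _ ≤ ∑ j : Fin m, ((j : ℕ) + 2) * Fin.tail d j :=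
      single_le_sum (f := fun j : Fin m => ((j : ℕ) + 2) * Fin.tail d j)
        (fun _ _ => Nat.zero_le _) (mem_univ j)
    _ ≤ n := hlt.le

/-- A partition `p` into distinct parts is recovered from all its gaps `p i - p (i + 1)`
but the first, since the first gap is fixed by `∑ i, p i = n`. -/
lemma sum_distinctParts_eq {M : Type*} [AddCommMonoid M] (n : ℕ)
    (F : (Fin (m + 1) → ℕ) → M) :
    ∑ p ∈ distinctParts (m + 1) n, F p =
      ∑ e ∈ positiveVectorsBelow (fun j : Fin m => (j : ℕ) + 2) n,
        F (tailSums (Fin.cons (n - ∑ j : Fin m, ((j : ℕ) + 2) * e j) e)) := by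
  have gaps_of_mem {p} (hp : p ∈ distinctParts (m + 1) n) :
      (∀ j, 1 ≤ gaps p j) ∧ tailSums (gaps p) = p ∧ ∑ i, p i = n := by
    obtain ⟨-, hanti, hpos, hsum⟩ := mem_filter.1 hp
    exact ⟨one_le_gaps hanti (hpos _), tailSums_gaps (StrictAnti.antitone hanti), hsum⟩
  have tailSums_cons_tail_gaps {p} (hp : p ∈ distinctParts (m + 1) n) :
      tailSums (Fin.cons (n - ∑ j : Fin m, ((j : ℕ) + 2) * Fin.tail (gaps p) j)
        (Fin.tail (gaps p))) = p := by
    obtain ⟨-, hp, hsum⟩ := gaps_of_mem hp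
    have hhead := sum_tailSums_eq_head_add (gaps p)
    rw [hp, hsum] at hhead
    rw [show n - ∑ j : Fin m, ((j : ℕ) + 2) * Fin.tail (gaps p) j = gaps p 0 by omega,
      Fin.cons_self_tail, hp]
  have cons_of_mem {e} (he : e ∈ positiveVectorsBelow (fun j : Fin m => (j : ℕ) + 2) n) :
      (∀ j, 1 ≤ (Fin.cons (n - ∑ j : Fin m, ((j : ℕ) + 2) * e j) e :
        Fin (m + 1) → ℕ) j) ∧
        ∑ i, tailSums (Fin.cons (n - ∑ j : Fin m, ((j : ℕ) + 2) * e j) e) i = n := by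
    simp only [positiveVectorsBelow, mem_filter, Fintype.mem_piFinset, mem_Icc] at he
    obtain ⟨he, hlt⟩ := he
    refine ⟨fun j => Fin.cases (by simp; omega) (fun j => by simpa using (he j).1) j, ?_⟩
    rw [sum_tailSums_eq_head_add]
    simp only [Fin.cons_zero, Fin.tail_cons]
    omega
  refine sum_nbij' (fun p => Fin.tail (gaps p))
    (fun e => tailSums (Fin.cons (n - ∑ j : Fin m, ((j : ℕ) + 2) * e j) e))
    (fun p hp => ?_) (fun e he => ?_) (fun p hp => tailSums_cons_tail_gaps hp)
    (fun e _ => by simp only [gaps_tailSums, Fin.tail_cons])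
    (fun p hp => congrArg F (tailSums_cons_tail_gaps hp).symm)
  · obtain ⟨hpos, hp, hsum⟩ := gaps_of_mem hp
    exact tail_mem_positiveVectorsBelow hpos (by rw [hp, hsum])
  · exact tailSums_mem_distinctParts (cons_of_mem he).1 (cons_of_mem he).2

end Bijection

section PositiveVectorsBelow

variable {ι : Type*} [Fintype ι] [DecidableEq ι]

lemma hasSum_pow_succ {x : ℝ} (h0 : 0 ≤ x) (h1 : x < 1) :
    HasSum (fun k : ℕ => x ^ (k + 1)) (x / (1 - x)) := by
  simpa [pow_succ', div_eq_mul_inv] using (hasSum_geometric_of_lt_one h0 h1).mul_left x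

lemma sum_piFinset_Icc_prod_pow (x : ι → ℝ) (M : ℕ) :
    ∑ e ∈ Fintype.piFinset (fun _ => Icc 1 M), ∏ i, x i ^ e i =
      ∏ i, ∑ k ∈ range M, x i ^ (k + 1) := by
  rw [← prod_univ_sum]
  refine prod_congr rfl fun i _ => ?_
  rw [range_eq_Ico, sum_Ico_add' (fun k => x i ^ k), zero_add, Ico_add_one_right_eq_Icc]

lemma sum_positiveVectorsBelow_le {x : ι → ℝ} (hx0 : ∀ i, 0 ≤ x i) (hx1 : ∀ i, x i < 1)
    (w : ι → ℕ) (n : ℕ) :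
    ∑ e ∈ positiveVectorsBelow w n, ∏ i, x i ^ e i ≤ ∏ i, x i / (1 - x i) :=
  calc ∑ e ∈ positiveVectorsBelow w n, ∏ i, x i ^ e i
      ≤ ∑ e ∈ Fintype.piFinset (fun _ => Icc 1 n), ∏ i, x i ^ e i :=
        sum_le_sum_of_subset_of_nonneg (filter_subset _ _)
          fun _ _ _ => prod_nonneg fun i _ => pow_nonneg (hx0 i) _
    _ = ∏ i, ∑ k ∈ range n, x i ^ (k + 1) := sum_piFinset_Icc_prod_pow x n
    _ ≤ ∏ i, x i / (1 - x i) :=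
        prod_le_prod (fun i _ => sum_nonneg fun _ _ => pow_nonneg (hx0 i) _) fun i _ =>
          sum_le_hasSum _ (fun _ _ => pow_nonneg (hx0 i) _) (hasSum_pow_succ (hx0 i) (hx1 i))

/-- The boxes `[1, M]^ι`, whose sums converge to the product, lie in `positiveVectorsBelow w n`
once `n > M + ∑ i, w i * M`. -/
lemma tendsto_sum_positiveVectorsBelow {x : ι → ℝ} (hx0 : ∀ i, 0 ≤ x i)
    (hx1 : ∀ i, x i < 1)
    (w : ι → ℕ) :
    Tendsto (fun n => ∑ e ∈ positiveVectorsBelow w n, ∏ i, x i ^ e i) atTop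
      (𝓝 (∏ i, x i / (1 - x i))) := by
  have hbox : Tendsto (fun M => ∑ e ∈ Fintype.piFinset (fun _ => Icc 1 M), ∏ i, x i ^ e i)
      atTop (𝓝 (∏ i, x i / (1 - x i))) := by
    simp_rw [sum_piFinset_Icc_prod_pow]
    exact tendsto_finsetProd _ fun i _ => (hasSum_pow_succ (hx0 i) (hx1 i)).tendsto_sum_nat
  refine tendsto_order.2 ⟨fun a ha => ?_, fun a ha =>
    Eventually.of_forall fun n => (sum_positiveVectorsBelow_le hx0 hx1 w n).trans_lt ha⟩
  obtain ⟨M, hM⟩ := (hbox.eventually (lt_mem_nhds ha)).exists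
  filter_upwards [eventually_gt_atTop (M + ∑ i, w i * M)] with n hn
  refine hM.trans_le (sum_le_sum_of_subset_of_nonneg (fun e he => ?_)
    fun _ _ _ => prod_nonneg fun i _ => pow_nonneg (hx0 i) _)
  simp only [Fintype.mem_piFinset, mem_Icc] at he
  have hsum : ∑ i, w i * e i ≤ ∑ i, w i * M :=
    sum_le_sum fun i _ => Nat.mul_le_mul_left _ (he i).2
  simp only [positiveVectorsBelow, mem_filter, Fintype.mem_piFinset, mem_Icc]
  exact ⟨fun i => ⟨(he i).1, by have := (he i).2; omega⟩, by omega⟩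

end PositiveVectorsBelow

noncomputable def partRatio (i : ℕ) : ℝ := (i + 2) / (i + 1)

noncomputable def gapRatio (j : ℕ) : ℝ := (j + 2) / 2 ^ (j + 1)

lemma gapRatio_zero : gapRatio 0 = 1 := by norm_num [gapRatio]

lemma gapRatio_nonneg (j : ℕ) : 0 ≤ gapRatio j := by unfold gapRatio; positivity

lemma gapRatio_succ (j : ℕ) : gapRatio (j + 1) = ((j : ℝ) + 3) / 2 ^ (j + 2) := by
  rw [gapRatio]
  push_cast
  ring_nf

lemma gapRatio_succ_lt_one (j : ℕ) : gapRatio (j + 1) < 1 := by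
  have h : j + 3 < 2 ^ (j + 2) := by
    have := j.lt_two_pow_self
    rw [pow_succ, pow_succ]
    omega
  rw [gapRatio_succ, div_lt_one (by positivity)]
  exact_mod_cast h

lemma gapRatio_succ_div_one_sub (j : ℕ) :
    gapRatio (j + 1) / (1 - gapRatio (j + 1)) =
      ((j : ℝ) + 3) / (2 ^ (j + 2) - ((j : ℝ) + 3)) := by
  rw [gapRatio_succ, one_sub_div (by positivity), div_div_div_cancel_right₀ (by positivity)]

lemma prod_range_partRatio_div_two (j : ℕ) :
    ∏ k ∈ range (j + 1), partRatio k / 2 = gapRatio j := by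
  induction j with
  | zero => norm_num [partRatio, gapRatio]
  | succ j ih =>
    rw [prod_range_succ, ih, partRatio, gapRatio, gapRatio]
    push_cast
    field_simp
    ring

lemma prod_partRatio_pow_eq_two_pow_mul {t : ℕ} (p : Fin t → ℕ) :
    ∏ i : Fin t, partRatio i ^ p i =
      2 ^ (∑ i, p i) * ∏ i : Fin t, (partRatio i / 2) ^ p i := by
  rw [← prod_pow_eq_pow_sum, ← prod_mul_distrib]
  refine prod_congr rfl fun i _ => ?_
  rw [← mul_pow, mul_div_cancel₀ _ two_ne_zero]

lemma prod_pow_tailSums_cons {m : ℕ} (c : ℕ) (e : Fin m → ℕ) :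
    ∏ i : Fin (m + 1), (partRatio i / 2) ^ tailSums (Fin.cons c e) i =
      ∏ j : Fin m, gapRatio (j + 1) ^ e j := by
  rw [prod_pow_tailSums, Fin.prod_univ_succ]
  have hIic (j : Fin (m + 1)) : ∏ i ∈ Iic j, partRatio i / 2 = gapRatio j := by
    rw [← prod_range_partRatio_div_two, Nat.range_succ_eq_Iic, ← Fin.map_valEmbedding_Iic,
      prod_map]
    rfl
  simp [hIic, gapRatio_zero]

lemma primeWeight_eq_sum_distinctParts (t n : ℕ) :
    primeWeight t n = 1 / ((t : ℝ) * ((t : ℝ) + 1)) *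
      ∑ p ∈ distinctParts t n, ∏ i : Fin t, partRatio i ^ p i := by
  rw [primeWeight, mul_sum]
  rfl

lemma primeWeight_succ_div_pow (m n : ℕ) :
    primeWeight (m + 1) n / 2 ^ n = 1 / (((m : ℝ) + 1) * ((m : ℝ) + 2)) *
      ∑ e ∈ positiveVectorsBelow (fun j : Fin m => (j : ℕ) + 2) n,
        ∏ j : Fin m, gapRatio (j + 1) ^ e j := by
  have hsum : ∑ p ∈ distinctParts (m + 1) n, ∏ i : Fin (m + 1), partRatio i ^ p i =
      2 ^ n * ∑ p ∈ distinctParts (m + 1) n, ∏ i : Fin (m + 1), (partRatio i / 2) ^ p i := by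
    rw [mul_sum]
    refine sum_congr rfl fun p hp => ?_
    rw [prod_partRatio_pow_eq_two_pow_mul, (mem_filter.1 hp).2.2.2]
  rw [primeWeight_eq_sum_distinctParts, hsum, sum_distinctParts_eq]
  simp only [prod_pow_tailSums_cons]
  push_cast
  field_simp
  ring

lemma qseq_succ_eq (m : ℕ) :
    qseq (m + 1) = 1 / (((m : ℝ) + 1) * ((m : ℝ) + 2)) *
      ∏ j : Fin m, gapRatio (j + 1) / (1 - gapRatio (j + 1)) := by
  induction m with
  | zero => norm_num [qseq]
  | succ k ih =>
    have hpos : (0 : ℝ) < 2 ^ (k + 2) - ((k : ℝ) + 3) := by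
      have := gapRatio_succ_lt_one k
      rw [gapRatio_succ, div_lt_one (by positivity)] at this
      linarith
    have hne : (2 : ℝ) ^ (k + 2) - ((k : ℝ) + 2) - 1 ≠ 0 := by linarith
    rw [qseq, ih, Fin.prod_univ_castSucc]
    simp only [Fin.val_castSucc, Fin.val_last]
    rw [gapRatio_succ_div_one_sub]
    generalize ∏ j : Fin k, gapRatio (j + 1) / (1 - gapRatio (j + 1)) = P
    push_cast
    field_simp
    ring

lemma qseq_nonneg (t : ℕ) : 0 ≤ qseq t := by
  cases t with
  | zero => exact le_rfl
  | succ m =>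
    rw [qseq_succ_eq]
    exact mul_nonneg (by positivity) (prod_nonneg fun j _ =>
      div_nonneg (gapRatio_nonneg _) (sub_nonneg.2 (gapRatio_succ_lt_one _).le))

lemma qseq_succ_le_half (k : ℕ) : qseq (k + 3) ≤ qseq (k + 2) / 2 := by
  have h : 3 * k + 8 ≤ 2 ^ (k + 3) := by
    have := k.lt_two_pow_self
    rw [pow_succ, pow_succ, pow_succ]
    omega
  have h' : 3 * (k : ℝ) + 8 ≤ 2 ^ (k + 3) := by exact_mod_cast h
  show qseq (k + 1 + 2) ≤ _
  rw [qseq, div_eq_mul_inv _ (2 : ℝ), mul_comm _ (2 : ℝ)⁻¹]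
  refine mul_le_mul_of_nonneg_right ?_ (qseq_nonneg _)
  rw [div_le_iff₀ (by push_cast; linarith)]
  push_cast
  linarith

lemma summable_qseq : Summable qseq := by
  refine summable_of_ratio_norm_eventually_le (r := 1 / 2) (by norm_num) ?_
  filter_upwards [eventually_ge_atTop 2] with n hn
  obtain ⟨k, rfl⟩ : ∃ k, n = k + 2 := ⟨n - 2, by omega⟩
  rw [Real.norm_of_nonneg (qseq_nonneg _), Real.norm_of_nonneg (qseq_nonneg _)]
  linarith [qseq_succ_le_half k]

lemma primeWeight_zero_left (n : ℕ) : primeWeight 0 n = 0 := by simp [primeWeight]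

lemma primeWeight_nonneg (t n : ℕ) : 0 ≤ primeWeight t n :=
  sum_nonneg fun _ _ => by positivity

lemma primeWeight_div_pow_le (t n : ℕ) : primeWeight t n / 2 ^ n ≤ qseq t := by
  cases t with
  | zero => simp [primeWeight_zero_left, qseq]
  | succ m =>
    rw [primeWeight_succ_div_pow, qseq_succ_eq]
    exact mul_le_mul_of_nonneg_left (sum_positiveVectorsBelow_le (fun _ => gapRatio_nonneg _)
      (fun _ => gapRatio_succ_lt_one _) _ n) (by positivity)

lemma tendsto_primeWeight_div_pow (t : ℕ) :
    Tendsto (fun n => primeWeight t n / 2 ^ n) atTop (𝓝 (qseq t)) := by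
  cases t with
  | zero => simp [primeWeight_zero_left, qseq]
  | succ m =>
    simp_rw [primeWeight_succ_div_pow, qseq_succ_eq]
    exact (tendsto_sum_positiveVectorsBelow (fun _ => gapRatio_nonneg _)
      (fun _ => gapRatio_succ_lt_one _) _).const_mul _

theorem stmt_11 :
    (∀ ε : ℝ, 0 < ε → ∃ N : ℕ, ∀ n : ℕ, N ≤ n →
      (∑' t : ℕ, primeWeight t n) > ((∑' t : ℕ, qseq t) - ε) * 2 ^ n) ∧
    Filter.Tendsto (fun n : ℕ => (∑' t : ℕ, primeWeight t n) / 2 ^ n)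
      Filter.atTop (nhds (∑' t : ℕ, qseq t)) := by
  have hlim : Tendsto (fun n : ℕ => (∑' t : ℕ, primeWeight t n) / 2 ^ n) atTop
      (𝓝 (∑' t : ℕ, qseq t)) := by
    simp_rw [← tsum_div_const]
    refine tendsto_tsum_of_dominated_convergence summable_qseq tendsto_primeWeight_div_pow
      (Eventually.of_forall fun n t => ?_)
    rw [Real.norm_of_nonneg (div_nonneg (primeWeight_nonneg t n) (by positivity))]
    exact primeWeight_div_pow_le t n
  refine ⟨fun ε hε => ?_, hlim⟩
  obtain ⟨N, hN⟩ := eventually_atTop.1 (hlim.eventually (lt_mem_nhds (sub_lt_self _ hε)))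
  exact ⟨N, fun n hn => (lt_div_iff₀ (by positivity)).1 (hN n hn)⟩
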